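/- Let T₁(y) = [(1−y⁴)·log(1+y²) + 2y⁴ − y² − 4y²·∫₁^y (log(1+x²)/x) dx] / (2y(1+y²)) and ΛT₁(y) = y·T₁'(y). Then as y → +∞: (i) ΛT₁(y) + y·log y = O((log y)²/y); (ii) ΛT₁(y) − T₁(y) + y = O((log y)²/y). -/

import Mathlib

/-!
Multiplying by `y`, the quotient rule expresses `y ΛT₁` and `y T₁` through `L = log (1 + y²)`,
`I(y) = ∫₁^y L(x)/x dx` and the bounded ratio `v = y² / (1 + y²)`. The term `-y log y` of `ΛT₁` is
`-(1 + y²) L / (2y)` up to `(1 + y²)(L - 2 log y) / (2y) = O(1/y)`, because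
`0 ≤ L - 2 log y = log (1 + y⁻²) ≤ y⁻²`. After this cancellation, `y (ΛT₁ + y log y)` and
`y (ΛT₁ - T₁ + y)` are combinations with bounded coefficients of `1`, `log y`, `L = O(log y)` and
`I ≤ L log y`, hence `O((log y)²)`.
-/

open MeasureTheory Filter Topology Asymptotics

noncomputable section

def T1 (y : ℝ) : ℝ :=
  ((1 - y ^ 4) * Real.log (1 + y ^ 2) + 2 * y ^ 4 - y ^ 2
      - 4 * y ^ 2 * ∫ x in (1 : ℝ)..y, Real.log (1 + x ^ 2) / x)
    / (2 * y * (1 + y ^ 2))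

def LamT1 (y : ℝ) : ℝ := y * deriv T1 y

open Real Set

def logIntegral (y : ℝ) : ℝ := ∫ x in (1 : ℝ)..y, log (1 + x ^ 2) / x

lemma continuousOn_log_one_add_sq_div :
    ContinuousOn (fun x : ℝ => log (1 + x ^ 2) / x) (Ioi 0) :=
  ((continuous_const.add (continuous_pow 2)).log
    fun x => (by positivity : (1 : ℝ) + x ^ 2 ≠ 0)).continuousOn.div
    continuousOn_id fun _ hx => (mem_Ioi.1 hx).ne'

lemma uIcc_one_subset_Ioi {y : ℝ} (hy : 0 < y) : uIcc 1 y ⊆ Ioi 0 :=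
  fun _ hx => lt_of_lt_of_le (lt_min one_pos hy) hx.1

lemma hasDerivAt_logIntegral {y : ℝ} (hy : 0 < y) :
    HasDerivAt logIntegral (log (1 + y ^ 2) / y) y :=
  intervalIntegral.integral_hasDerivAt_right
    (continuousOn_log_one_add_sq_div.mono (uIcc_one_subset_Ioi hy)).intervalIntegrable
    (continuousOn_log_one_add_sq_div.stronglyMeasurableAtFilter isOpen_Ioi y hy)
    (continuousOn_log_one_add_sq_div.continuousAt (Ioi_mem_nhds hy))

lemma logIntegral_nonneg {y : ℝ} (hy : 1 ≤ y) : 0 ≤ logIntegral y :=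
  intervalIntegral.integral_nonneg hy fun x hx =>
    div_nonneg (log_nonneg (by nlinarith [hx.1])) (by linarith [hx.1])

lemma logIntegral_le_mul_log {y : ℝ} (hy : 1 ≤ y) :
    logIntegral y ≤ log (1 + y ^ 2) * log y := by
  have hsub := uIcc_one_subset_Ioi (by linarith : (0 : ℝ) < y)
  calc logIntegral y ≤ ∫ x in (1 : ℝ)..y, log (1 + y ^ 2) * x⁻¹ := by
        refine intervalIntegral.integral_mono_on hy
          (continuousOn_log_one_add_sq_div.mono hsub).intervalIntegrable
          ((intervalIntegral.intervalIntegrable_inv (fun x hx => (hsub hx).ne')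
            continuousOn_id).const_mul _) fun x hx => ?_
        have hx0 : 0 < x := by linarith [hx.1]
        rw [← div_eq_mul_inv]
        gcongr
        nlinarith [hx.2]
    _ = log (1 + y ^ 2) * log y := by
        rw [intervalIntegral.integral_const_mul, integral_inv_of_pos one_pos (by linarith),
          div_one]

lemma hasDerivAt_T1 {y : ℝ} (hy : 0 < y) :
    HasDerivAt T1 ((-(1 + y ^ 2) * log (1 + y ^ 2) / 2 + y ^ 2 / (1 + y ^ 2) *
        (1 / 2 + 3 * (y ^ 2 / (1 + y ^ 2)) + 2 * (2 * (y ^ 2 / (1 + y ^ 2)) - 1) * logIntegral y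
          - 2 * log (1 + y ^ 2))) / y ^ 2) y := by
  have hs : HasDerivAt (fun x : ℝ => 1 + x ^ 2) (2 * y) y := by
    simpa using (hasDerivAt_pow 2 y).const_add 1
  have hL : HasDerivAt (fun x : ℝ => log (1 + x ^ 2)) ((1 + y ^ 2)⁻¹ * (2 * y)) y :=
    (hasDerivAt_log (by positivity)).comp y hs
  have hnum := (((((hasDerivAt_pow 4 y).const_sub 1).mul hL).add
    ((hasDerivAt_pow 4 y).const_mul 2)).sub (hasDerivAt_pow 2 y)).sub
    (((hasDerivAt_pow 2 y).const_mul 4).mul (hasDerivAt_logIntegral hy))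
  have hden := ((hasDerivAt_id' y).const_mul 2).mul hs
  refine (hnum.div hden (show 2 * y * (1 + y ^ 2) ≠ 0 by positivity)).congr_deriv ?_
  simp only [Pi.mul_apply, Pi.add_apply, Pi.sub_apply, Nat.cast_ofNat]
  field_simp
  ring

lemma mul_LamT1_eq {y : ℝ} (hy : 0 < y) :
    y * LamT1 y = -(1 + y ^ 2) * log (1 + y ^ 2) / 2 + y ^ 2 / (1 + y ^ 2) *
      (1 / 2 + 3 * (y ^ 2 / (1 + y ^ 2)) + 2 * (2 * (y ^ 2 / (1 + y ^ 2)) - 1) * logIntegral y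
        - 2 * log (1 + y ^ 2)) := by
  rw [LamT1, (hasDerivAt_T1 hy).deriv]
  field_simp

lemma mul_T1_eq {y : ℝ} (hy : 0 < y) :
    y * T1 y = (1 - y ^ 2) * log (1 + y ^ 2) / 2 + y ^ 2
      - 3 / 2 * (y ^ 2 / (1 + y ^ 2)) - 2 * (y ^ 2 / (1 + y ^ 2)) * logIntegral y := by
  rw [T1, ← logIntegral]
  field_simp
  ring

lemma log_one_add_sq_sub_two_mul_log_nonneg {y : ℝ} (hy : 0 < y) :
    0 ≤ log (1 + y ^ 2) - 2 * log y := by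
  have h := log_le_log (pow_pos hy 2) (show y ^ 2 ≤ 1 + y ^ 2 by linarith)
  rw [log_pow] at h
  push_cast at h
  linarith

lemma log_one_add_sq_sub_two_mul_log_le {y : ℝ} (hy : 0 < y) :
    log (1 + y ^ 2) - 2 * log y ≤ 1 / y ^ 2 := by
  have h := log_le_sub_one_of_pos (show 0 < (1 + y ^ 2) / y ^ 2 by positivity)
  rw [log_div (by positivity) (by positivity), log_pow, add_div, div_self (by positivity)] at h
  push_cast at h
  linarith

lemma Asymptotics.IsBigO.mul_of_isBigO_one {α R S : Type*} [SeminormedRing R] [NormedRing S]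
    [NormMulClass S] {l : Filter α} {f g : α → R} {h : α → S}
    (hf : f =O[l] fun _ => (1 : S)) (hg : g =O[l] h) : (fun x => f x * g x) =O[l] h :=
  (hf.mul hg).congr_right fun _ => one_mul _

lemma isBigO_div_self_of_isBigO_mul {f g : ℝ → ℝ} (h : (fun y => y * f y) =O[atTop] g) :
    f =O[atTop] fun y => g y / y := by
  refine ((isBigO_refl (fun y : ℝ => y⁻¹) atTop).mul h).congr' ?_ ?_
  · filter_upwards [eventually_ne_atTop 0] with y hy
    rw [inv_mul_cancel_left₀ hy]
  · exact Eventually.of_forall fun y => inv_mul_eq_div _ _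

lemma eventually_one_le_log : ∀ᶠ y in atTop, 1 ≤ log y :=
  tendsto_log_atTop.eventually_ge_atTop 1

lemma isBigO_const_log_sq (c : ℝ) : (fun _ : ℝ => c) =O[atTop] fun y => log y ^ 2 :=
  (isBigO_const_one ℝ c atTop).trans <| IsBigO.of_bound' <| eventually_one_le_log.mono
    fun y hy => by
      rw [norm_one, norm_pow, norm_eq_abs]
      exact one_le_pow₀ (hy.trans (le_abs_self _))

lemma isBigO_log_log_sq : log =O[atTop] fun y => log y ^ 2 :=
  IsBigO.of_bound' <| eventually_one_le_log.mono fun y hy => by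
    rw [norm_of_nonneg (by positivity), norm_of_nonneg (by positivity)]
    nlinarith

lemma isBigO_sq_div_one_add_sq :
    (fun y : ℝ => y ^ 2 / (1 + y ^ 2)) =O[atTop] fun _ => (1 : ℝ) :=
  IsBigO.of_bound' <| Eventually.of_forall fun y => by
    rw [norm_one, norm_of_nonneg (by positivity), div_le_one (by positivity)]
    linarith

lemma isBigO_one_add_sq_mul_log_one_add_sq_sub :
    (fun y : ℝ => (1 + y ^ 2) * (log (1 + y ^ 2) - 2 * log y)) =O[atTop] fun _ => (1 : ℝ) :=
  IsBigO.of_bound 2 <| (eventually_ge_atTop 1).mono fun y hy => by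
    have hy0 : 0 < y := by linarith
    have hle := mul_le_mul_of_nonneg_left (log_one_add_sq_sub_two_mul_log_le hy0)
      (show 0 ≤ 1 + y ^ 2 by positivity)
    rw [norm_one, mul_one, norm_of_nonneg
      (mul_nonneg (by positivity) (log_one_add_sq_sub_two_mul_log_nonneg hy0))]
    refine hle.trans ?_
    rw [mul_one_div, div_le_iff₀ (by positivity)]
    nlinarith

lemma isBigO_log_one_add_sq : (fun y : ℝ => log (1 + y ^ 2)) =O[atTop] log :=
  IsBigO.of_bound 3 <| ((eventually_ge_atTop 1).and eventually_one_le_log).mono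
    fun y ⟨hy, hlog⟩ => by
      have hle := log_one_add_sq_sub_two_mul_log_le (by linarith : (0 : ℝ) < y)
      have hinv : 1 / y ^ 2 ≤ 1 := by
        rw [div_le_one (by positivity)]
        nlinarith
      rw [norm_of_nonneg (log_nonneg (by nlinarith)), norm_of_nonneg (by linarith)]
      linarith

lemma isBigO_logIntegral : logIntegral =O[atTop] fun y => log y ^ 2 := by
  have hle : logIntegral =O[atTop] fun y => log (1 + y ^ 2) * log y :=
    IsBigO.of_bound' <| (eventually_ge_atTop 1).mono fun y hy => by
      rw [norm_of_nonneg (logIntegral_nonneg hy),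
        norm_of_nonneg (mul_nonneg (log_nonneg (by nlinarith)) (log_nonneg hy))]
      exact logIntegral_le_mul_log hy
  exact (hle.trans (isBigO_log_one_add_sq.mul (isBigO_refl log atTop))).congr_right
    fun y => (sq (log y)).symm

lemma isBigO_mul_LamT1_add_mul_log :
    (fun y => y * (LamT1 y + y * log y)) =O[atTop] fun y => log y ^ 2 := by
  have hv := isBigO_sq_div_one_add_sq
  have hv' := hv.trans (isBigO_const_log_sq 1)
  have hL := isBigO_log_one_add_sq.trans isBigO_log_log_sq
  have hlog_sub := isBigO_one_add_sq_mul_log_one_add_sq_sub.trans (isBigO_const_log_sq 1)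
  have hcoeff : (fun y : ℝ => 2 * (2 * (y ^ 2 / (1 + y ^ 2)) - 1)) =O[atTop] fun _ => (1 : ℝ) :=
    ((hv.const_mul_left 2).sub (isBigO_refl _ _)).const_mul_left 2
  have hR : (fun y : ℝ => -(1 / 2) * ((1 + y ^ 2) * (log (1 + y ^ 2) - 2 * log y)) - log y
      + y ^ 2 / (1 + y ^ 2) * (1 / 2 + 3 * (y ^ 2 / (1 + y ^ 2))
        + 2 * (2 * (y ^ 2 / (1 + y ^ 2)) - 1) * logIntegral y - 2 * log (1 + y ^ 2)))
      =O[atTop] fun y => log y ^ 2 :=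
    ((hlog_sub.const_mul_left _).sub isBigO_log_log_sq).add <| hv.mul_of_isBigO_one <|
      (((isBigO_const_log_sq _).add (hv'.const_mul_left 3)).add
        (hcoeff.mul_of_isBigO_one isBigO_logIntegral)).sub (hL.const_mul_left 2)
  refine hR.congr' ?_ EventuallyEq.rfl
  filter_upwards [eventually_gt_atTop 0] with y hy
  linear_combination -mul_LamT1_eq hy

lemma isBigO_mul_LamT1_sub_T1_add :
    (fun y => y * (LamT1 y - T1 y + y)) =O[atTop] fun y => log y ^ 2 := by
  have hv := isBigO_sq_div_one_add_sq
  have hv' := hv.trans (isBigO_const_log_sq 1)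
  have hL := isBigO_log_one_add_sq.trans isBigO_log_log_sq
  have hR : (fun y : ℝ => -log (1 + y ^ 2) + y ^ 2 / (1 + y ^ 2) * (2 + 3 * (y ^ 2 / (1 + y ^ 2))
        + 4 * (y ^ 2 / (1 + y ^ 2)) * logIntegral y - 2 * log (1 + y ^ 2)))
      =O[atTop] fun y => log y ^ 2 :=
    hL.neg_left.add <| hv.mul_of_isBigO_one <|
      (((isBigO_const_log_sq _).add (hv'.const_mul_left 3)).add
        ((hv.const_mul_left 4).mul_of_isBigO_one isBigO_logIntegral)).sub (hL.const_mul_left 2)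
  refine hR.congr' ?_ EventuallyEq.rfl
  filter_upwards [eventually_gt_atTop 0] with y hy
  linear_combination mul_T1_eq hy - mul_LamT1_eq hy

/-- Asymptotics as `y → +∞`: `ΛT₁(y) = -y log y + O((log y)²/y)` and
`ΛT₁(y) - T₁(y) = -y + O((log y)²/y)`. -/
theorem LamT1_asymptotics :
    ((fun y => LamT1 y + y * Real.log y) =O[atTop]
        fun y => (Real.log y) ^ 2 / y) ∧
    ((fun y => LamT1 y - T1 y + y) =O[atTop]
        fun y => (Real.log y) ^ 2 / y) :=
  ⟨isBigO_div_self_of_isBigO_mul isBigO_mul_LamT1_add_mul_log,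
    isBigO_div_self_of_isBigO_mul isBigO_mul_LamT1_sub_T1_add⟩

end
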